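/- arXiv:2112.02424 — 4 statements merged into one kernel-verified Lean document; each statement's English description precedes it below -/
import Mathlib

section
/- Let P and Q be probability measures on ℝⁿ with P absolutely continuous with respect to Q, and let f: [0,∞) → ℝ be convex, lower semicontinuous and differentiable with f(1) = 0. Then the supremum in the variational representation D_f(P‖Q) = sup_h { ∫ h dP − ∫ f*(h) dQ } is attained at h = f'(dP/dQ); that is, ∫ f'(dP/dQ) dP − ∫ f*(f'(dP/dQ)) dQ = D_f(P‖Q). -/
open MeasureTheory Set

/-- Convex conjugate of `f`, where the supremum is taken over `x ≥ 0`
(the domain of `f` is `[0, ∞)`). -/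
noncomputable def fConj (f : ℝ → ℝ) (y : ℝ) : ℝ :=
  sSup {z : ℝ | ∃ x : ℝ, 0 ≤ x ∧ z = x * y - f x}

/-- The `f`-divergence `D_f(P‖Q) = ∫ f(dP/dQ) dQ`. -/
noncomputable def fDiv {n : ℕ} (f : ℝ → ℝ) (P Q : Measure (Fin n → ℝ)) : ℝ :=
  ∫ x, f ((P.rnDeriv Q x).toReal) ∂Q

/-!
Since the tangent line of a convex `f` at `t ≥ 0` lies below `f`, the supremum defining
`f*(f' t)` is attained at `x = t`, so `f*(f' t) = t f'(t) - f(t)`. With `t = dP/dQ` and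
`∫ g dP = ∫ (dP/dQ) g dQ`, the two integrals differ by exactly `∫ f(dP/dQ) dQ`.
-/

theorem ConvexOn.mul_sub_le_sub_of_hasDerivWithinAt {S : Set ℝ} {f : ℝ → ℝ} {f' x y : ℝ}
    (hfc : ConvexOn ℝ S f) (hx : x ∈ S) (hy : y ∈ S) (hf' : HasDerivWithinAt f f' S x) :
    f' * (y - x) ≤ f y - f x := by
  rcases lt_trichotomy y x with hyx | rfl | hxy
  · have hslope := hfc.slope_le_of_hasDerivWithinAt hy hx hyx hf'
    rw [slope_def_field, div_le_iff₀ (sub_pos.mpr hyx)] at hslope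
    linarith
  · simp
  · have hslope := hfc.le_slope_of_hasDerivWithinAt hx hy hxy hf'
    rw [slope_def_field, le_div_iff₀ (sub_pos.mpr hxy)] at hslope
    linarith

theorem fConj_eq_of_hasDerivWithinAt {f : ℝ → ℝ} {f' t : ℝ} (hfc : ConvexOn ℝ (Ici 0) f)
    (ht : 0 ≤ t) (hf' : HasDerivWithinAt f f' (Ici 0) t) :
    fConj f f' = t * f' - f t := by
  refine IsGreatest.csSup_eq ⟨⟨t, ht, rfl⟩, ?_⟩
  rintro z ⟨x, hx, rfl⟩
  have := hfc.mul_sub_le_sub_of_hasDerivWithinAt ht hx hf'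
  linarith

theorem fDiv_variational_attained_general {n : ℕ} (P Q : Measure (Fin n → ℝ))
    [IsProbabilityMeasure P] [IsProbabilityMeasure Q] (hPQ : P ≪ Q)
    (f f' : ℝ → ℝ)
    (hconv : ConvexOn ℝ (Ici (0:ℝ)) f)
    (hderiv : ∀ x ∈ Ici (0:ℝ), HasDerivWithinAt f (f' x) (Ici (0:ℝ)) x)
    (hint0 : Integrable (fun x => f ((P.rnDeriv Q x).toReal)) Q)
    (hint2 : Integrable (fun x => fConj f (f' ((P.rnDeriv Q x).toReal))) Q) :
    (∫ x, f' ((P.rnDeriv Q x).toReal) ∂P)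
      - (∫ x, fConj f (f' ((P.rnDeriv Q x).toReal)) ∂Q) = fDiv f P Q := by
  set r : (Fin n → ℝ) → ℝ := fun x => (P.rnDeriv Q x).toReal
  have hconj : (fun x => fConj f (f' (r x))) = fun x => r x * f' (r x) - f (r x) :=
    funext fun x => fConj_eq_of_hasDerivWithinAt hconv ENNReal.toReal_nonneg
      (hderiv _ ENNReal.toReal_nonneg)
  rw [hconj] at hint2 ⊢
  have hint_mul : Integrable (fun x => r x * f' (r x)) Q :=
    (hint2.add hint0).congr (.of_forall fun x => sub_add_cancel _ _)
  have := Measure.haveLebesgueDecomposition_of_sigmaFinite P Q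
  rw [← integral_toReal_rnDeriv_mul hPQ, ← integral_sub hint_mul hint2]
  simp only [sub_sub_cancel]
  rfl

/-- The supremum in the variational representation of the `f`-divergence is attained at
`h = f'(dP/dQ)`: one has `∫ f'(dP/dQ) dP − ∫ f*(f'(dP/dQ)) dQ = D_f(P‖Q)`. -/
theorem fDiv_variational_attained {n : ℕ} (P Q : Measure (Fin n → ℝ))
    [IsProbabilityMeasure P] [IsProbabilityMeasure Q] (hPQ : P ≪ Q)
    (f f' : ℝ → ℝ)
    (hconv : ConvexOn ℝ (Ici (0:ℝ)) f)
    (hlsc : LowerSemicontinuousOn f (Ici (0:ℝ)))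
    (hderiv : ∀ x ∈ Ici (0:ℝ), HasDerivWithinAt f (f' x) (Ici (0:ℝ)) x)
    (hf1 : f 1 = 0)
    (hint0 : Integrable (fun x => f ((P.rnDeriv Q x).toReal)) Q)
    (hint1 : Integrable (fun x => f' ((P.rnDeriv Q x).toReal)) P)
    (hint2 : Integrable (fun x => fConj f (f' ((P.rnDeriv Q x).toReal))) Q) :
    (∫ x, f' ((P.rnDeriv Q x).toReal) ∂P)
      - (∫ x, fConj f (f' ((P.rnDeriv Q x).toReal)) ∂Q) = fDiv f P Q :=
  fDiv_variational_attained_general P Q hPQ f f' hconv hderiv hint0 hint2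
end

section
/- (Smoothness estimate for the variational objective.) Let P and Q be probability measures on ℝⁿ with P absolutely continuous with respect to Q, let f: [0,∞) → ℝ be convex, lower semicontinuous, differentiable and α-strongly convex with f(1) = 0, and set h₀ = f'(dP/dQ) and J(h) = ∫ h dP − ∫ f*(h) dQ. Then for every measurable h̃ with ‖h̃ − h₀‖_{2,Q} < ∞ (and all integrals well-defined), J(h₀) − J(h̃) ≤ (1/(2α))·‖h̃ − h₀‖_{2,Q}². -/
/-!
Strong convexity puts `f` above its tangent parabolas
`f t + f' t (x - t) + α/2 (x - t)²`. Dualising, `f*(f' t) = t f' t - f t` and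
`f*(y) ≤ f*(f' t) + t (y - f' t) + (y - f' t)²/(2α)`. Taking `t = dP/dQ`, `y = h̃`
pointwise and writing `∫ (h₀ - h̃) dP = ∫ (dP/dQ)(h₀ - h̃) dQ`, `J(h₀) - J(h̃)` becomes
the `Q`-integral of a function bounded pointwise by `(h̃ - h₀)²/(2α)`.
-/

open MeasureTheory Set

/-- The `L²(Q)` norm `‖g‖_{2,Q} = (∫ g² dQ)^{1/2}`. -/
noncomputable def normL2 {n : ℕ} (Q : Measure (Fin n → ℝ)) (g : (Fin n → ℝ) → ℝ) : ℝ :=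
  Real.sqrt (∫ x, (g x) ^ 2 ∂Q)

theorem ConvexOn.add_mul_sub_le_of_hasDerivWithinAt {s : Set ℝ} {g : ℝ → ℝ} {g' t x : ℝ}
    (hg : ConvexOn ℝ s g) (hg' : HasDerivWithinAt g g' s t) (ht : t ∈ s) (hx : x ∈ s) :
    g t + g' * (x - t) ≤ g x := by
  rcases lt_trichotomy x t with hxt | rfl | htx
  · have := hg.slope_le_of_hasDerivWithinAt hx ht hxt hg'
    rw [slope_def_field, div_le_iff₀ (sub_pos.mpr hxt)] at this
    linarith
  · simp
  · have := hg.le_slope_of_hasDerivWithinAt ht hx htx hg'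
    rw [slope_def_field, le_div_iff₀ (sub_pos.mpr htx)] at this
    linarith

theorem StrongConvexOn.add_mul_sub_add_sq_le_of_hasDerivWithinAt {s : Set ℝ} {f : ℝ → ℝ}
    {m f't t x : ℝ} (hf : StrongConvexOn s m f) (hf' : HasDerivWithinAt f f't s t)
    (ht : t ∈ s) (hx : x ∈ s) :
    f t + f't * (x - t) + m / 2 * (x - t) ^ 2 ≤ f x := by
  have hconv : ConvexOn ℝ s fun x => f x - m / 2 * x ^ 2 := by
    simpa only [Real.norm_eq_abs, sq_abs] using strongConvexOn_iff_convex.mp hf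
  have hderiv : HasDerivWithinAt (fun x => f x - m / 2 * x ^ 2) (f't - m * t) s t := by
    refine (hf'.sub ((hasDerivAt_pow 2 t).const_mul (m / 2)).hasDerivWithinAt).congr_deriv ?_
    norm_num
    ring
  linear_combination hconv.add_mul_sub_le_of_hasDerivWithinAt hderiv ht hx

theorem mul_sub_half_mul_sq_le {α : ℝ} (hα : 0 < α) (a b : ℝ) :
    a * b - α / 2 * a ^ 2 ≤ 1 / (2 * α) * b ^ 2 := by
  have key : 0 ≤ 1 / (2 * α) * (b - α * a) ^ 2 := by positivity
  have expand : 1 / (2 * α) * (b - α * a) ^ 2 = 1 / (2 * α) * b ^ 2 - (a * b - α / 2 * a ^ 2) := by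
    field_simp
    ring
  linarith

section Conjugate

variable {f f' : ℝ → ℝ} {α t : ℝ}

theorem mem_upperBounds_fConj_set (hα : 0 < α)
    (htan : ∀ x, 0 ≤ x → f t + f' t * (x - t) + α / 2 * (x - t) ^ 2 ≤ f x) (y : ℝ) :
    t * y - f t + 1 / (2 * α) * (y - f' t) ^ 2 ∈
      upperBounds {z : ℝ | ∃ x : ℝ, 0 ≤ x ∧ z = x * y - f x} := by
  rintro z ⟨x, hx, rfl⟩
  have := mul_sub_half_mul_sq_le hα (x - t) (y - f' t)
  linarith [htan x hx]

theorem fConj_le_sub_add_sq (hα : 0 < α)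
    (htan : ∀ x, 0 ≤ x → f t + f' t * (x - t) + α / 2 * (x - t) ^ 2 ≤ f x) (y : ℝ) :
    fConj f y ≤ t * y - f t + 1 / (2 * α) * (y - f' t) ^ 2 :=
  csSup_le ⟨_, 0, le_rfl, rfl⟩ (mem_upperBounds_fConj_set hα htan y)

theorem fConj_apply_deriv (hα : 0 < α) (ht : 0 ≤ t)
    (htan : ∀ x, 0 ≤ x → f t + f' t * (x - t) + α / 2 * (x - t) ^ 2 ≤ f x) :
    fConj f (f' t) = t * f' t - f t := by
  refine le_antisymm (by simpa using fConj_le_sub_add_sq hα htan (f' t)) ?_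
  exact le_csSup ⟨_, mem_upperBounds_fConj_set hα htan (f' t)⟩ ⟨t, ht, rfl⟩

-- `f*` is `1/α`-smooth, with gradient `t` at `f' t`.
theorem fConj_le_fConj_deriv_add (hα : 0 < α) (ht : 0 ≤ t)
    (htan : ∀ x, 0 ≤ x → f t + f' t * (x - t) + α / 2 * (x - t) ^ 2 ≤ f x) (y : ℝ) :
    fConj f y ≤ fConj f (f' t) + t * (y - f' t) + 1 / (2 * α) * (y - f' t) ^ 2 := by
  rw [fConj_apply_deriv hα ht htan]
  linarith [fConj_le_sub_add_sq hα htan y]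

end Conjugate

theorem normL2_sq {n : ℕ} (Q : Measure (Fin n → ℝ)) (g : (Fin n → ℝ) → ℝ) :
    normL2 Q g ^ 2 = ∫ x, g x ^ 2 ∂Q :=
  Real.sq_sqrt (integral_nonneg fun x => sq_nonneg (g x))

theorem variational_objective_smoothness_general {n : ℕ} (P Q : Measure (Fin n → ℝ))
    [IsProbabilityMeasure P] [IsProbabilityMeasure Q] (hPQ : P ≪ Q)
    (f f' : ℝ → ℝ) (α : ℝ) (hα : 0 < α)
    (hderiv : ∀ x ∈ Ici (0:ℝ), HasDerivWithinAt f (f' x) (Ici (0:ℝ)) x)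
    (hstrong : StrongConvexOn (Ici (0:ℝ)) α f)
    (hint1 : Integrable (fun x => f' ((P.rnDeriv Q x).toReal)) P)
    (hint2 : Integrable (fun x => fConj f (f' ((P.rnDeriv Q x).toReal))) Q) :
    ∀ htil : (Fin n → ℝ) → ℝ, Measurable htil →
      Integrable htil P → Integrable (fun x => fConj f (htil x)) Q →
      Integrable (fun x => (htil x - f' ((P.rnDeriv Q x).toReal)) ^ 2) Q →
      ((∫ x, f' ((P.rnDeriv Q x).toReal) ∂P)
          - ∫ x, fConj f (f' ((P.rnDeriv Q x).toReal)) ∂Q)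
        - ((∫ x, htil x ∂P) - ∫ x, fConj f (htil x) ∂Q)
      ≤ (1 / (2 * α)) * (normL2 Q (fun x => htil x - f' ((P.rnDeriv Q x).toReal))) ^ 2 := by
  intro htil _ hiP hiC hiSq
  set r : (Fin n → ℝ) → ℝ := fun x => (P.rnDeriv Q x).toReal
  set h₀ : (Fin n → ℝ) → ℝ := fun x => f' (r x)
  have hr : ∀ x, 0 ≤ r x := fun x => ENNReal.toReal_nonneg
  have hpointwise : ∀ x, r x * (h₀ x - htil x) + (fConj f (htil x) - fConj f (h₀ x))
      ≤ 1 / (2 * α) * (htil x - h₀ x) ^ 2 := fun x => by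
    have := fConj_le_fConj_deriv_add hα (hr x) (fun y hy =>
      hstrong.add_mul_sub_add_sq_le_of_hasDerivWithinAt (hderiv _ (hr x)) (hr x) hy) (htil x)
    linarith
  have := Measure.haveLebesgueDecomposition_of_sigmaFinite P Q
  have hiR : Integrable (fun x => r x * (h₀ x - htil x)) Q :=
    (integrable_toReal_rnDeriv_mul_iff hPQ).mpr (hint1.sub hiP)
  have hiD : Integrable (fun x => fConj f (htil x) - fConj f (h₀ x)) Q := hiC.sub hint2
  calc (∫ x, h₀ x ∂P - ∫ x, fConj f (h₀ x) ∂Q) - (∫ x, htil x ∂P - ∫ x, fConj f (htil x) ∂Q)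
      = ∫ x, (r x * (h₀ x - htil x) + (fConj f (htil x) - fConj f (h₀ x))) ∂Q := by
        rw [integral_add hiR hiD, integral_toReal_rnDeriv_mul hPQ,
          integral_sub hint1 hiP, integral_sub hiC hint2]
        ring
    _ ≤ ∫ x, 1 / (2 * α) * (htil x - h₀ x) ^ 2 ∂Q :=
        integral_mono (hiR.add hiD) (hiSq.const_mul _) hpointwise
    _ = 1 / (2 * α) * normL2 Q (fun x => htil x - h₀ x) ^ 2 := by
        rw [integral_const_mul, normL2_sq]

/-- Smoothness estimate for the variational objective `J(h) = ∫ h dP − ∫ f*(h) dQ`: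
with `h₀ = f'(dP/dQ)`, for every measurable `h̃` one has
`J(h₀) − J(h̃) ≤ (1/(2α)) ‖h̃ − h₀‖_{2,Q}²`. -/
theorem variational_objective_smoothness {n : ℕ} (P Q : Measure (Fin n → ℝ))
    [IsProbabilityMeasure P] [IsProbabilityMeasure Q] (hPQ : P ≪ Q)
    (f f' : ℝ → ℝ) (α : ℝ) (hα : 0 < α)
    (hconv : ConvexOn ℝ (Ici (0:ℝ)) f)
    (hlsc : LowerSemicontinuousOn f (Ici (0:ℝ)))
    (hderiv : ∀ x ∈ Ici (0:ℝ), HasDerivWithinAt f (f' x) (Ici (0:ℝ)) x)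
    (hstrong : StrongConvexOn (Ici (0:ℝ)) α f)
    (hf1 : f 1 = 0)
    (hint1 : Integrable (fun x => f' ((P.rnDeriv Q x).toReal)) P)
    (hint2 : Integrable (fun x => fConj f (f' ((P.rnDeriv Q x).toReal))) Q) :
    ∀ htil : (Fin n → ℝ) → ℝ, Measurable htil →
      Integrable htil P → Integrable (fun x => fConj f (htil x)) Q →
      Integrable (fun x => (htil x - f' ((P.rnDeriv Q x).toReal)) ^ 2) Q →
      ((∫ x, f' ((P.rnDeriv Q x).toReal) ∂P)
          - ∫ x, fConj f (f' ((P.rnDeriv Q x).toReal)) ∂Q)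
        - ((∫ x, htil x ∂P) - ∫ x, fConj f (htil x) ∂Q)
      ≤ (1 / (2 * α)) * (normL2 Q (fun x => htil x - f' ((P.rnDeriv Q x).toReal))) ^ 2 :=
  variational_objective_smoothness_general P Q hPQ f f' α hα hderiv hstrong hint1 hint2
end

section
/- (Variational formula for the KL divergence with a reference measure.) Let P, Q and μ be probability measures on ℝⁿ admitting positive densities (also denoted P, Q, μ) with respect to Lebesgue measure, with P absolutely continuous with respect to Q. Then D(P‖Q) = 1 + sup_h { ∫ log( h(x)·μ(x)/Q(x) ) dP(x) − ∫ h dμ }, where the supremum is over all measurable functions h: ℝⁿ → (0,∞) for which both integrals are well-defined, and the supremum is attained at h = dP/dμ. -/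
/-!
Write `P = p·ν`, `μ = m·ν` and let `h > 0`. Pointwise,
`log (h m / q) = log (p / q) + log (h m / p)` and `log (h m / p) ≤ h m / p - 1`.
Integrating against `P` turns `h m / p` into `∫ h m dν = ∫ h dμ`, so every feasible value is at most
`D(P‖Q) - 1`, with equality exactly when `h m = p`, i.e. at `h = p / m`.
-/

open MeasureTheory Set

/-- The feasible values of the variational formula for the KL divergence with reference
measure `μ` (with density `m`): values `∫ log(h·m/q) dP − ∫ h dμ` over measurable
positive `h` for which both integrals are well-defined. -/
def klVarSet {n : ℕ} (q m : (Fin n → ℝ) → ℝ) (P μ : Measure (Fin n → ℝ)) : Set ℝ :=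
  {r : ℝ | ∃ h : (Fin n → ℝ) → ℝ, Measurable h ∧ (∀ x, 0 < h x) ∧
    Integrable (fun x => Real.log (h x * m x / q x)) P ∧ Integrable h μ ∧
    r = (∫ x, Real.log (h x * m x / q x) ∂P) - ∫ x, h x ∂μ}

section WithDensity

variable {α : Type*} [MeasurableSpace α] {ν : Measure α} {m : α → ℝ}

lemma integrable_withDensity_ofReal_iff (hm : Measurable m) (hm_nonneg : ∀ x, 0 ≤ m x)
    {g : α → ℝ} :
    Integrable g (ν.withDensity fun x => ENNReal.ofReal (m x)) ↔
      Integrable (fun x => g x * m x) ν := by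
  rw [integrable_withDensity_iff hm.ennreal_ofReal (ae_of_all _ fun _ => ENNReal.ofReal_lt_top)]
  simp only [ENNReal.toReal_ofReal (hm_nonneg _)]

lemma integral_withDensity_ofReal (hm : Measurable m) (hm_nonneg : ∀ x, 0 ≤ m x) (g : α → ℝ) :
    ∫ x, g x ∂(ν.withDensity fun x => ENNReal.ofReal (m x)) = ∫ x, g x * m x ∂ν := by
  rw [integral_withDensity_eq_integral_toReal_smul hm.ennreal_ofReal
    (ae_of_all _ fun _ => ENNReal.ofReal_lt_top)]
  simp only [ENNReal.toReal_ofReal (hm_nonneg _), smul_eq_mul, mul_comm]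

lemma integrable_div_withDensity_ofReal_iff (hm : Measurable m) (hm_pos : ∀ x, 0 < m x)
    {f : α → ℝ} :
    Integrable (fun x => f x / m x) (ν.withDensity fun x => ENNReal.ofReal (m x)) ↔
      Integrable f ν := by
  simp only [integrable_withDensity_ofReal_iff hm fun x => (hm_pos x).le,
    div_mul_cancel₀ _ (hm_pos _).ne']

lemma integral_div_withDensity_ofReal (hm : Measurable m) (hm_pos : ∀ x, 0 < m x)
    (f : α → ℝ) :
    ∫ x, f x / m x ∂(ν.withDensity fun x => ENNReal.ofReal (m x)) = ∫ x, f x ∂ν := by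
  simp only [integral_withDensity_ofReal hm fun x => (hm_pos x).le,
    div_mul_cancel₀ _ (hm_pos _).ne']

lemma integrable_of_isProbabilityMeasure_withDensity_ofReal (hm : Measurable m)
    (hm_nonneg : ∀ x, 0 ≤ m x)
    [IsProbabilityMeasure (ν.withDensity fun x => ENNReal.ofReal (m x))] : Integrable m ν := by
  simpa using (integrable_withDensity_ofReal_iff hm hm_nonneg).1
    (integrable_const (1 : ℝ) (μ := ν.withDensity fun x => ENNReal.ofReal (m x)))

lemma integral_eq_one_of_isProbabilityMeasure_withDensity_ofReal (hm : Measurable m)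
    (hm_nonneg : ∀ x, 0 ≤ m x)
    [IsProbabilityMeasure (ν.withDensity fun x => ENNReal.ofReal (m x))] : ∫ x, m x ∂ν = 1 := by
  simpa [integral_withDensity_ofReal hm hm_nonneg] using
    integral_const (1 : ℝ) (μ := ν.withDensity fun x => ENNReal.ofReal (m x))

end WithDensity

lemma integral_log_div_density_le {α : Type*} [MeasurableSpace α] {ν : Measure α}
    {p g : α → ℝ} (hp : Measurable p) (hp_pos : ∀ x, 0 < p x)
    [IsProbabilityMeasure (ν.withDensity fun x => ENNReal.ofReal (p x))]
    (hg_pos : ∀ x, 0 < g x) (hg : Integrable g ν)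
    (hlog : Integrable (fun x => Real.log (g x / p x))
      (ν.withDensity fun x => ENNReal.ofReal (p x))) :
    ∫ x, Real.log (g x / p x) ∂(ν.withDensity fun x => ENNReal.ofReal (p x))
      ≤ ∫ x, g x ∂ν - 1 := by
  have hg_div : Integrable (fun x => g x / p x) (ν.withDensity fun x => ENNReal.ofReal (p x)) :=
    (integrable_div_withDensity_ofReal_iff hp hp_pos).2 hg
  calc ∫ x, Real.log (g x / p x) ∂(ν.withDensity fun x => ENNReal.ofReal (p x))
      ≤ ∫ x, (g x / p x - 1) ∂(ν.withDensity fun x => ENNReal.ofReal (p x)) :=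
        integral_mono hlog (hg_div.sub (integrable_const 1)) fun x =>
          Real.log_le_sub_one_of_pos (div_pos (hg_pos x) (hp_pos x))
    _ = ∫ x, g x ∂ν - 1 := by
        rw [integral_sub hg_div (integrable_const 1), integral_div_withDensity_ofReal hp hp_pos]
        simp

section KLVariational

variable {n : ℕ} {p q m : (Fin n → ℝ) → ℝ} {ν : Measure (Fin n → ℝ)}

lemma le_of_mem_klVarSet (hp : Measurable p) (hm : Measurable m)
    (hp_pos : ∀ x, 0 < p x) (hq_pos : ∀ x, 0 < q x) (hm_pos : ∀ x, 0 < m x)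
    [IsProbabilityMeasure (ν.withDensity fun x => ENNReal.ofReal (p x))]
    (hKL : Integrable (fun x => Real.log (p x / q x))
      (ν.withDensity fun x => ENNReal.ofReal (p x)))
    {r : ℝ} (hr : r ∈ klVarSet q m (ν.withDensity fun x => ENNReal.ofReal (p x))
      (ν.withDensity fun x => ENNReal.ofReal (m x))) :
    r ≤ ∫ x, Real.log (p x / q x) ∂(ν.withDensity fun x => ENNReal.ofReal (p x)) - 1 := by
  obtain ⟨h, -, hh_pos, hlog, hh, rfl⟩ := hr
  have hlog_split : ∀ x, Real.log (h x * m x / q x)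
      = Real.log (p x / q x) + Real.log (h x * m x / p x) := fun x => by
    have hhm : h x * m x ≠ 0 := (mul_pos (hh_pos x) (hm_pos x)).ne'
    rw [Real.log_div hhm (hq_pos x).ne', Real.log_div hhm (hp_pos x).ne',
      Real.log_div (hp_pos x).ne' (hq_pos x).ne']
    ring
  have hlog_hm_p : Integrable (fun x => Real.log (h x * m x / p x))
      (ν.withDensity fun x => ENNReal.ofReal (p x)) :=
    (hlog.sub hKL).congr (ae_of_all _ fun x => by rw [Pi.sub_apply, hlog_split]; ring)
  have hgibbs := integral_log_div_density_le hp hp_pos (fun x => mul_pos (hh_pos x) (hm_pos x))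
    ((integrable_withDensity_ofReal_iff hm fun x => (hm_pos x).le).1 hh) hlog_hm_p
  rw [integral_withDensity_ofReal hm fun x => (hm_pos x).le]
  simp only [hlog_split]
  rw [integral_add hKL hlog_hm_p]
  linarith

lemma integral_log_sub_integral_at_div_eq (hp : Measurable p) (hm : Measurable m)
    (hp_pos : ∀ x, 0 < p x) (hm_pos : ∀ x, 0 < m x)
    [IsProbabilityMeasure (ν.withDensity fun x => ENNReal.ofReal (p x))] :
    (∫ x, Real.log ((p x / m x) * m x / q x) ∂(ν.withDensity fun x => ENNReal.ofReal (p x)))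
        - ∫ x, p x / m x ∂(ν.withDensity fun x => ENNReal.ofReal (m x))
      = ∫ x, Real.log (p x / q x) ∂(ν.withDensity fun x => ENNReal.ofReal (p x)) - 1 := by
  simp only [div_mul_cancel₀ _ (hm_pos _).ne', integral_div_withDensity_ofReal hm hm_pos,
    integral_eq_one_of_isProbabilityMeasure_withDensity_ofReal hp fun x => (hp_pos x).le]

lemma isGreatest_klVarSet (hp : Measurable p) (hm : Measurable m)
    (hp_pos : ∀ x, 0 < p x) (hq_pos : ∀ x, 0 < q x) (hm_pos : ∀ x, 0 < m x)
    [IsProbabilityMeasure (ν.withDensity fun x => ENNReal.ofReal (p x))]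
    (hKL : Integrable (fun x => Real.log (p x / q x))
      (ν.withDensity fun x => ENNReal.ofReal (p x))) :
    IsGreatest (klVarSet q m (ν.withDensity fun x => ENNReal.ofReal (p x))
        (ν.withDensity fun x => ENNReal.ofReal (m x)))
      (∫ x, Real.log (p x / q x) ∂(ν.withDensity fun x => ENNReal.ofReal (p x)) - 1) := by
  refine ⟨⟨fun x => p x / m x, hp.div hm, fun x => div_pos (hp_pos x) (hm_pos x), ?_, ?_,
    (integral_log_sub_integral_at_div_eq hp hm hp_pos hm_pos).symm⟩,
    fun r hr => le_of_mem_klVarSet hp hm hp_pos hq_pos hm_pos hKL hr⟩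
  · simpa only [div_mul_cancel₀ _ (hm_pos _).ne'] using hKL
  · exact (integrable_div_withDensity_ofReal_iff hm hm_pos).2
      (integrable_of_isProbabilityMeasure_withDensity_ofReal hp fun x => (hp_pos x).le)

end KLVariational

theorem klDiv_variational_with_reference_general {n : ℕ}
    (p q m : (Fin n → ℝ) → ℝ)
    (hpm : Measurable p) (hmm : Measurable m)
    (hppos : ∀ x, 0 < p x) (hqpos : ∀ x, 0 < q x) (hmpos : ∀ x, 0 < m x)
    (P μ : Measure (Fin n → ℝ))
    (hP : P = volume.withDensity fun x => ENNReal.ofReal (p x))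
    (hμ : μ = volume.withDensity fun x => ENNReal.ofReal (m x))
    [IsProbabilityMeasure P]
    (hKLfin : Integrable (fun x => Real.log (p x / q x)) P) :
    (∫ x, Real.log (p x / q x) ∂P) = 1 + sSup (klVarSet q m P μ)
    ∧ IsGreatest (klVarSet q m P μ)
        ((∫ x, Real.log ((p x / m x) * m x / q x) ∂P) - ∫ x, p x / m x ∂μ) := by
  subst hP hμ
  have hmax := isGreatest_klVarSet hpm hmm hppos hqpos hmpos hKLfin
  refine ⟨by rw [hmax.csSup_eq]; ring, ?_⟩
  rwa [integral_log_sub_integral_at_div_eq hpm hmm hppos hmpos]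

/-- Variational formula for the KL divergence with a reference measure `μ`:
`D(P‖Q) = 1 + sup_h { ∫ log(h·μ/Q) dP − ∫ h dμ }`, and the supremum is attained at
`h = dP/dμ`.  Here `P`, `Q`, `μ` are probability measures with positive densities
`p`, `q`, `m` with respect to Lebesgue measure, and `P ≪ Q`. -/
theorem klDiv_variational_with_reference {n : ℕ}
    (p q m : (Fin n → ℝ) → ℝ)
    (hpm : Measurable p) (hqm : Measurable q) (hmm : Measurable m)
    (hppos : ∀ x, 0 < p x) (hqpos : ∀ x, 0 < q x) (hmpos : ∀ x, 0 < m x)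
    (P Q μ : Measure (Fin n → ℝ))
    (hP : P = volume.withDensity fun x => ENNReal.ofReal (p x))
    (hQ : Q = volume.withDensity fun x => ENNReal.ofReal (q x))
    (hμ : μ = volume.withDensity fun x => ENNReal.ofReal (m x))
    [IsProbabilityMeasure P] [IsProbabilityMeasure Q] [IsProbabilityMeasure μ]
    (hPQ : P ≪ Q)
    (hKLfin : Integrable (fun x => Real.log (p x / q x)) P) :
    (∫ x, Real.log (p x / q x) ∂P) = 1 + sSup (klVarSet q m P μ)
    ∧ IsGreatest (klVarSet q m P μ)
        ((∫ x, Real.log ((p x / m x) * m x / q x) ∂P) - ∫ x, p x / m x ∂μ) :=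
  klDiv_variational_with_reference_general p q m hpm hmm hppos hqpos hmpos P μ hP hμ hKLfin
end

section
/- (Variational formula for the Jensen–Shannon divergence.) Let P and Q be probability measures on ℝⁿ, each absolutely continuous with respect to (P+Q)/2. Then JSD(P‖Q) = log 4 + sup_h { ∫ log(1 − h(x)) dP(x) + ∫ log h(z) dQ(z) }, where the supremum is over all measurable functions h: ℝⁿ → (0,1) for which both integrals are well-defined. -/
/-! With `M = (P + Q) / 2`, `p = dP/dM` and `q = dQ/dM` one has `p + q = 2` `M`-a.e., and
both the objective and the divergence become `M`-integrals:
`∫ log (1 - h) dP + ∫ log h dQ = ∫ (p log (1 - h) + q log h) dM` and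
`JSD(P‖Q) - log 4 = ∫ (p log (p / 2) + q log (q / 2)) dM`.
The pointwise inequality `p log a ≤ p log p + a - p` (i.e. `log x ≤ x - 1`), applied with
`a = 2 (1 - h)` and `a = 2 h`, bounds the first integrand by the second. Conversely the optimal
`h = q / 2`, clipped to `[ε, 1 - ε]` so that both logarithms stay integrable, loses at most
`2 log (1 - ε)`, which tends to `0`. -/

open MeasureTheory Set ENNReal

/-- The Kullback–Leibler divergence `D(P‖Q) = ∫ log(dP/dQ) dP`. -/
noncomputable def klDiv {n : ℕ} (P Q : Measure (Fin n → ℝ)) : ℝ :=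
  ∫ x, Real.log ((P.rnDeriv Q x).toReal) ∂P

/-- The (twice) Jensen–Shannon divergence
`JSD(P‖Q) = D(P‖(P+Q)/2) + D(Q‖(P+Q)/2)`. -/
noncomputable def jsd {n : ℕ} (P Q : Measure (Fin n → ℝ)) : ℝ :=
  klDiv P ((2 : ℝ≥0∞)⁻¹ • (P + Q)) + klDiv Q ((2 : ℝ≥0∞)⁻¹ • (P + Q))

open Filter Topology

lemma mul_log_le_mul_log_add_sub {p a : ℝ} (hp : 0 ≤ p) (ha : 0 < a) :
    p * Real.log a ≤ p * Real.log p + a - p := by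
  rcases hp.eq_or_lt with rfl | hp
  · simpa using ha.le
  have := mul_le_mul_of_nonneg_left (Real.log_le_sub_one_of_pos (div_pos ha hp)) hp.le
  rw [Real.log_div ha.ne' hp.ne', mul_sub, mul_sub, mul_div_cancel₀ _ hp.ne'] at this
  linarith

lemma mul_log_add_log_le_mul_log {p a b : ℝ} (hp : 0 ≤ p) (ha : 0 < a) (hab : p * a ≤ b) :
    p * (Real.log p + Real.log a) ≤ p * Real.log b := by
  rcases hp.eq_or_lt with rfl | hp
  · simp
  rw [← Real.log_mul hp.ne' ha.ne']
  exact mul_le_mul_of_nonneg_left (Real.log_le_log (by positivity) hab) hp.le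

lemma log_four : Real.log 4 = 2 * Real.log 2 := by
  rw [show (4 : ℝ) = 2 ^ 2 by norm_num, Real.log_pow, Nat.cast_ofNat]

lemma mul_log_one_sub_add_mul_log_le {p q s : ℝ} (hp : 0 ≤ p) (hq : 0 ≤ q) (hpq : p + q = 2)
    (hs : s ∈ Ioo 0 1) :
    p * Real.log (1 - s) + q * Real.log s ≤ p * Real.log p + q * Real.log q - Real.log 4 := by
  obtain ⟨hs0, hs1⟩ := hs
  have h₁ := mul_log_le_mul_log_add_sub hp (a := 2 * (1 - s)) (by linarith)
  have h₂ := mul_log_le_mul_log_add_sub hq (a := 2 * s) (by linarith)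
  rw [Real.log_mul two_ne_zero (by linarith)] at h₁
  rw [Real.log_mul two_ne_zero hs0.ne'] at h₂
  linear_combination h₁ + h₂ + (-1 - Real.log 2) * hpq + log_four

lemma mul_one_sub_le_clamp {t ε : ℝ} (ht : t ∈ Icc 0 1) (hε₀ : 0 ≤ ε) (hε : ε ≤ 1 / 2) :
    t * (1 - ε) ≤ min (max t ε) (1 - ε) ∧ (1 - t) * (1 - ε) ≤ 1 - min (max t ε) (1 - ε) := by
  obtain ⟨ht0, ht1⟩ := ht
  rcases le_total t ε with htε | htε
  · rw [max_eq_right htε, min_eq_left (by linarith)]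
    constructor <;> nlinarith
  rw [max_eq_left htε]
  rcases le_total t (1 - ε) with ht' | ht'
  · rw [min_eq_left ht']
    constructor <;> nlinarith
  · rw [min_eq_right ht']
    constructor <;> nlinarith

lemma le_mul_log_one_sub_clamp_add_mul_log_clamp {p q ε : ℝ} (hp : 0 ≤ p) (hq : 0 ≤ q)
    (hpq : p + q = 2) (hε₀ : 0 ≤ ε) (hε : ε ≤ 1 / 2) :
    p * Real.log p + q * Real.log q - Real.log 4 + 2 * Real.log (1 - ε) ≤
      p * Real.log (1 - min (max (q / 2) ε) (1 - ε)) +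
        q * Real.log (min (max (q / 2) ε) (1 - ε)) := by
  have ha : 0 < (1 - ε) / 2 := by linarith
  obtain ⟨h₁, h₂⟩ := mul_one_sub_le_clamp (t := q / 2) ⟨by positivity, by linarith⟩ hε₀ hε
  have hp' := mul_log_add_log_le_mul_log hp ha (b := 1 - min (max (q / 2) ε) (1 - ε)) <| by
    rwa [show p * ((1 - ε) / 2) = (1 - q / 2) * (1 - ε) by linear_combination (1 - ε) / 2 * hpq]
  have hq' := mul_log_add_log_le_mul_log hq ha (b := min (max (q / 2) ε) (1 - ε)) (by linarith)
  rw [Real.log_div (by linarith) two_ne_zero] at hp' hq'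
  linear_combination hp' + hq' + (Real.log 2 - Real.log (1 - ε)) * hpq - log_four

lemma exists_lt_add_two_mul_log_one_sub {w c : ℝ} (hw : w < c) :
    ∃ ε, 0 < ε ∧ ε ≤ 1 / 2 ∧ w < c + 2 * Real.log (1 - ε) := by
  have hcont : ContinuousAt (fun ε : ℝ => c + 2 * Real.log (1 - ε)) 0 := by
    fun_prop (disch := norm_num)
  have hnear : ∀ᶠ ε in 𝓝 0, w < c + 2 * Real.log (1 - ε) :=
    hcont.eventually (lt_mem_nhds (by simpa using hw))
  obtain ⟨ε, hwε, hε₀, hε⟩ :=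
    ((hnear.filter_mono nhdsWithin_le_nhds).and
      (Ioc_mem_nhdsGT (by norm_num : (0 : ℝ) < 1 / 2))).exists
  exact ⟨ε, hε₀, hε, hwε⟩

variable {α : Type*} {mα : MeasurableSpace α}

noncomputable def mixture (P Q : Measure α) : Measure α := (2 : ℝ≥0∞)⁻¹ • (P + Q)

noncomputable def jsDiv (P Q : Measure α) : ℝ :=
  ∫ x, Real.log (P.rnDeriv (mixture P Q) x).toReal ∂P +
    ∫ x, Real.log (Q.rnDeriv (mixture P Q) x).toReal ∂Q

lemma integrable_log_of_mem_Icc {μ : Measure α} [IsFiniteMeasure μ] {f : α → ℝ} {ε : ℝ}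
    (hf : Measurable f) (hε : 0 < ε) (hfε : ∀ x, f x ∈ Icc ε 1) :
    Integrable (fun x => Real.log (f x)) μ := by
  refine .of_bound hf.log.aestronglyMeasurable (-Real.log ε) (ae_of_all _ fun x => ?_)
  obtain ⟨hεf, hf1⟩ := hfε x
  rw [Real.norm_eq_abs, abs_of_nonpos (Real.log_nonpos (hε.le.trans hεf) hf1), neg_le_neg_iff]
  exact Real.log_le_log hε hεf

lemma integrable_log_rnDeriv_of_ae_le {μ ν : Measure α} [IsFiniteMeasure μ] [IsFiniteMeasure ν]
    (hμν : μ ≪ ν) {C : ℝ} (hC : ∀ᵐ x ∂ν, (μ.rnDeriv ν x).toReal ≤ C) :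
    Integrable (fun x => Real.log (μ.rnDeriv ν x).toReal) μ := by
  obtain ⟨B, hB⟩ :=
    isCompact_Icc.exists_bound_of_continuousOn (Real.continuous_mul_log.continuousOn (s := Icc 0 C))
  refine (integrable_rnDeriv_mul_log_iff hμν).1 (.of_bound ?_ B ?_)
  · have hm := (Measure.measurable_rnDeriv μ ν).ennreal_toReal
    exact (hm.mul hm.log).aestronglyMeasurable
  · filter_upwards [hC] with x hx using hB _ ⟨toReal_nonneg, hx⟩

lemma integral_sub_const {μ : Measure α} [IsProbabilityMeasure μ] {f : α → ℝ} (hf : Integrable f μ)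
    (c : ℝ) : ∫ x, (f x - c) ∂μ = ∫ x, f x ∂μ - c := by
  simp [integral_sub hf (integrable_const c)]

section Mixture

variable (P Q : Measure α)

lemma absolutelyContinuous_mixture_left : P ≪ mixture P Q :=
  ((Measure.AbsolutelyContinuous.refl P).add_right Q).trans
    (Measure.absolutelyContinuous_smul (by simp))

lemma absolutelyContinuous_mixture_right : Q ≪ mixture P Q :=
  ((Measure.AbsolutelyContinuous.refl Q).add_right' P).trans
    (Measure.absolutelyContinuous_smul (by simp))

instance [IsProbabilityMeasure P] [IsProbabilityMeasure Q] :
    IsProbabilityMeasure (mixture P Q) := by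
  constructor
  rw [mixture, Measure.smul_apply, Measure.add_apply, measure_univ, measure_univ, smul_eq_mul,
    one_add_one_eq_two, ENNReal.inv_mul_cancel two_ne_zero ofNat_ne_top]

variable [IsFiniteMeasure P] [IsFiniteMeasure Q]

instance : IsFiniteMeasure (mixture P Q) :=
  (P + Q).smul_finite (by simp)

lemma rnDeriv_mixture_add :
    ∀ᵐ x ∂mixture P Q,
      (P.rnDeriv (mixture P Q) x).toReal + (Q.rnDeriv (mixture P Q) x).toReal = 2 := by
  have h2M : P + Q = (2 : ℝ≥0∞) • mixture P Q := by
    rw [mixture, smul_smul, ENNReal.mul_inv_cancel two_ne_zero ofNat_ne_top, one_smul]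
  have hadd := Measure.rnDeriv_add P Q (mixture P Q)
  rw [h2M] at hadd
  filter_upwards [hadd,
      Measure.rnDeriv_smul_left_of_ne_top (mixture P Q) (mixture P Q) (ofNat_ne_top (n := 2)),
      Measure.rnDeriv_self (mixture P Q), Measure.rnDeriv_ne_top P (mixture P Q),
      Measure.rnDeriv_ne_top Q (mixture P Q)] with x hadd hsmul hself hP hQ
  rw [← ENNReal.toReal_add hP hQ, ← Pi.add_apply, ← hadd, hsmul]
  simp [hself]

lemma integrable_rnDeriv_mixture_mul_add {f g : α → ℝ} (hf : Integrable f P)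
    (hg : Integrable g Q) :
    Integrable (fun x => (P.rnDeriv (mixture P Q) x).toReal * f x +
      (Q.rnDeriv (mixture P Q) x).toReal * g x) (mixture P Q) :=
  ((integrable_toReal_rnDeriv_mul_iff (absolutelyContinuous_mixture_left P Q)).2 hf).add
    ((integrable_toReal_rnDeriv_mul_iff (absolutelyContinuous_mixture_right P Q)).2 hg)

lemma integral_add_integral_eq_integral_mixture {f g : α → ℝ} (hf : Integrable f P)
    (hg : Integrable g Q) :
    ∫ x, f x ∂P + ∫ x, g x ∂Q = ∫ x, ((P.rnDeriv (mixture P Q) x).toReal * f x +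
      (Q.rnDeriv (mixture P Q) x).toReal * g x) ∂mixture P Q := by
  have hPM := absolutelyContinuous_mixture_left P Q
  have hQM := absolutelyContinuous_mixture_right P Q
  rw [integral_add ((integrable_toReal_rnDeriv_mul_iff hPM).2 hf)
    ((integrable_toReal_rnDeriv_mul_iff hQM).2 hg), integral_toReal_rnDeriv_mul hPM,
    integral_toReal_rnDeriv_mul hQM]

lemma integrable_log_rnDeriv_mixture_left :
    Integrable (fun x => Real.log (P.rnDeriv (mixture P Q) x).toReal) P :=
  integrable_log_rnDeriv_of_ae_le (absolutelyContinuous_mixture_left P Q) (C := 2) <|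
    (rnDeriv_mixture_add P Q).mono fun x hx => by
      linarith [(Q.rnDeriv (mixture P Q) x).toReal_nonneg]

lemma integrable_log_rnDeriv_mixture_right :
    Integrable (fun x => Real.log (Q.rnDeriv (mixture P Q) x).toReal) Q :=
  integrable_log_rnDeriv_of_ae_le (absolutelyContinuous_mixture_right P Q) (C := 2) <|
    (rnDeriv_mixture_add P Q).mono fun x hx => by
      linarith [(P.rnDeriv (mixture P Q) x).toReal_nonneg]

lemma jsDiv_eq_integral_mixture :
    jsDiv P Q = ∫ x,
      ((P.rnDeriv (mixture P Q) x).toReal * Real.log (P.rnDeriv (mixture P Q) x).toReal +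
        (Q.rnDeriv (mixture P Q) x).toReal * Real.log (Q.rnDeriv (mixture P Q) x).toReal)
      ∂mixture P Q :=
  integral_add_integral_eq_integral_mixture P Q (integrable_log_rnDeriv_mixture_left P Q)
    (integrable_log_rnDeriv_mixture_right P Q)

end Mixture

section Variational

variable (P Q : Measure α) [IsProbabilityMeasure P] [IsProbabilityMeasure Q]

lemma integral_log_one_sub_add_integral_log_le {h : α → ℝ} (hh : ∀ x, h x ∈ Ioo 0 1)
    (h₁ : Integrable (fun x => Real.log (1 - h x)) P)
    (h₂ : Integrable (fun x => Real.log (h x)) Q) :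
    ∫ x, Real.log (1 - h x) ∂P + ∫ x, Real.log (h x) ∂Q ≤ jsDiv P Q - Real.log 4 := by
  have hG := integrable_rnDeriv_mixture_mul_add P Q (integrable_log_rnDeriv_mixture_left P Q)
    (integrable_log_rnDeriv_mixture_right P Q)
  rw [integral_add_integral_eq_integral_mixture P Q h₁ h₂, jsDiv_eq_integral_mixture,
    ← integral_sub_const hG]
  refine integral_mono_ae (integrable_rnDeriv_mixture_mul_add P Q h₁ h₂)
    (hG.sub (integrable_const (Real.log 4))) ?_
  filter_upwards [rnDeriv_mixture_add P Q] with x hx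
  exact mul_log_one_sub_add_mul_log_le toReal_nonneg toReal_nonneg hx (hh x)

lemma exists_le_integral_log_one_sub_add_integral_log {ε : ℝ} (hε₀ : 0 < ε) (hε : ε ≤ 1 / 2) :
    ∃ h : α → ℝ, Measurable h ∧ (∀ x, h x ∈ Ioo 0 1) ∧
      Integrable (fun x => Real.log (1 - h x)) P ∧ Integrable (fun x => Real.log (h x)) Q ∧
      jsDiv P Q - Real.log 4 + 2 * Real.log (1 - ε) ≤
        ∫ x, Real.log (1 - h x) ∂P + ∫ x, Real.log (h x) ∂Q := by
  set h : α → ℝ := fun x => min (max ((Q.rnDeriv (mixture P Q) x).toReal / 2) ε) (1 - ε)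
  have hm : Measurable h := by unfold h; fun_prop
  have hlo (x : α) : ε ≤ h x := le_min (le_max_right _ _) (by linarith)
  have hhi (x : α) : h x ≤ 1 - ε := min_le_right _ _
  have h₁ : Integrable (fun x => Real.log (1 - h x)) P :=
    integrable_log_of_mem_Icc (measurable_const.sub hm) hε₀
      fun x => ⟨by linarith [hhi x], by linarith [hlo x]⟩
  have h₂ : Integrable (fun x => Real.log (h x)) Q :=
    integrable_log_of_mem_Icc hm hε₀ fun x => ⟨hlo x, by linarith [hhi x]⟩
  refine ⟨h, hm, fun x => ⟨hε₀.trans_le (hlo x), (hhi x).trans_lt (by linarith)⟩, h₁, h₂, ?_⟩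
  have hG := integrable_rnDeriv_mixture_mul_add P Q (integrable_log_rnDeriv_mixture_left P Q)
    (integrable_log_rnDeriv_mixture_right P Q)
  rw [integral_add_integral_eq_integral_mixture P Q h₁ h₂, jsDiv_eq_integral_mixture,
    sub_add, ← integral_sub_const hG]
  refine integral_mono_ae (hG.sub (integrable_const _))
    (integrable_rnDeriv_mixture_mul_add P Q h₁ h₂) ?_
  filter_upwards [rnDeriv_mixture_add P Q] with x hx
  linarith [le_mul_log_one_sub_clamp_add_mul_log_clamp toReal_nonneg toReal_nonneg hx hε₀.le hε]

end Variational

theorem jsd_variational_general {n : ℕ} (P Q : Measure (Fin n → ℝ))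
    [IsProbabilityMeasure P] [IsProbabilityMeasure Q] :
    jsd P Q = Real.log 4 +
      sSup {r : ℝ | ∃ h : (Fin n → ℝ) → ℝ, Measurable h ∧
        (∀ x, h x ∈ Set.Ioo (0:ℝ) 1) ∧
        Integrable (fun x => Real.log (1 - h x)) P ∧
        Integrable (fun x => Real.log (h x)) Q ∧
        r = (∫ x, Real.log (1 - h x) ∂P) + ∫ x, Real.log (h x) ∂Q} := by
  rw [csSup_eq_of_forall_le_of_forall_lt_exists_gt (b := jsDiv P Q - Real.log 4) ?_ ?_ ?_]
  · change jsDiv P Q = _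
    ring
  · obtain ⟨h, hm, hh, h₁, h₂, -⟩ :=
      exists_le_integral_log_one_sub_add_integral_log P Q (ε := 1 / 2) (by norm_num) le_rfl
    exact ⟨_, h, hm, hh, h₁, h₂, rfl⟩
  · rintro _ ⟨h, -, hh, h₁, h₂, rfl⟩
    exact integral_log_one_sub_add_integral_log_le P Q hh h₁ h₂
  · intro w hw
    obtain ⟨ε, hε₀, hε, hwε⟩ := exists_lt_add_two_mul_log_one_sub hw
    obtain ⟨h, hm, hh, h₁, h₂, hle⟩ :=
      exists_le_integral_log_one_sub_add_integral_log P Q hε₀ hε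
    exact ⟨_, ⟨h, hm, hh, h₁, h₂, rfl⟩, hwε.trans_le hle⟩

/-- Variational formula for the Jensen–Shannon divergence:
`JSD(P‖Q) = log 4 + sup_h { ∫ log(1 − h) dP + ∫ log h dQ }`, the supremum being over
all measurable `h : ℝⁿ → (0,1)` for which both integrals are well-defined. -/
theorem jsd_variational {n : ℕ} (P Q : Measure (Fin n → ℝ))
    [IsProbabilityMeasure P] [IsProbabilityMeasure Q]
    (hP : P ≪ (2 : ℝ≥0∞)⁻¹ • (P + Q))
    (hQ : Q ≪ (2 : ℝ≥0∞)⁻¹ • (P + Q)) :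
    jsd P Q = Real.log 4 +
      sSup {r : ℝ | ∃ h : (Fin n → ℝ) → ℝ, Measurable h ∧
        (∀ x, h x ∈ Set.Ioo (0:ℝ) 1) ∧
        Integrable (fun x => Real.log (1 - h x)) P ∧
        Integrable (fun x => Real.log (h x)) Q ∧
        r = (∫ x, Real.log (1 - h x) ∂P) + ∫ x, Real.log (h x) ∂Q} :=
  jsd_variational_general P Q
end
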